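/- arXiv:2106.07336 — 2 statements merged into one kernel-verified Lean document; each statement's English description precedes it below -/
import Mathlib

section
/- Let G be a finite bipartite graph with left vertex set U of size m ≥ 1 and right vertex set V of size n ≥ 1, with no isolated vertices, and let k be an odd positive integer. Let P and Q be the probability mass functions on U and V given by P(u) = d(u)/|E(G)| and Q(v) = d(v)/|E(G)|. Then the number |𝒫_k| of walks of length k in G (where edges may be repeated) satisfies |𝒫_k| ≥ |E(G)|^k · exp( -((k-1)/2) · (H(P) + H(Q)) ), where the entropies are in nats. -/
/-- The bipartite graph on `U ⊕ V` determined by the relation `R : U → V → Prop`: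
a left vertex `u` is adjacent to a right vertex `v` iff `R u v`, and there are no
edges within `U` or within `V`. -/
def bipGraph {U V : Type*} (R : U → V → Prop) : SimpleGraph (U ⊕ V) where
  Adj x y :=
    Sum.elim (fun u => Sum.elim (fun _ => False) (fun v => R u v))
      (fun v => Sum.elim (fun u => R u v) (fun _ => False)) x y
  symm := ⟨by rintro (u | v) (u' | v') h <;> simp_all⟩
  loopless := ⟨by rintro (u | v) h <;> exact h⟩

/-- The degree of the left vertex `u`. -/
def degL {U V : Type*} [Fintype V] (R : U → V → Prop) [∀ u v, Decidable (R u v)] (u : U) : ℕ :=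
  (Finset.univ.filter fun v => R u v).card

/-- The degree of the right vertex `v`. -/
def degR {U V : Type*} [Fintype U] (R : U → V → Prop) [∀ u v, Decidable (R u v)] (v : V) : ℕ :=
  (Finset.univ.filter fun u => R u v).card

/-- The number of edges of the bipartite graph. -/
def edgeCount {U V : Type*} [Fintype U] [Fintype V] (R : U → V → Prop)
    [∀ u v, Decidable (R u v)] : ℕ :=
  (Finset.univ.filter fun p : U × V => R p.1 p.2).card

/-- The number of walks of length `k` in the bipartite graph (sequences of `k + 1`
vertices, each adjacent to the next; vertices and edges may be repeated). -/
noncomputable def walkCount {U V : Type*} [Fintype U] [Fintype V]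
    (R : U → V → Prop) (k : ℕ) : ℕ :=
  ∑ x : U ⊕ V, ∑ y : U ⊕ V, Nat.card {w : (bipGraph R).Walk x y // w.length = k}

/-- The Shannon entropy (in nats) of a probability mass function `p` on a finite set,
with the convention `0 · log 0 = 0` (automatic in Lean since `Real.log 0 = 0`). -/
noncomputable def entPMF {α : Type*} [Fintype α] (p : α → ℝ) : ℝ :=
  -∑ a, p a * Real.log (p a)


/-!
Write `w_k(x)` for the number of walks of length `k` starting at `x`, so that
`w_{k+1}(u) = ∑_{v ∼ u} w_k(v)`. AM–GM over the `d(u)` neighbours of `u` gives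
`d(u) log w_{k+1}(u) ≥ d(u) log d(u) + ∑_{v ∼ u} log w_k(v)`, and summing over `u` (double
counting the edges) yields `∑_u d(u) log w_{k+1}(u) ≥ ∑_u d(u) log d(u) + ∑_v d(v) log w_k(v)`.
Alternating between the two sides `2t` times bounds `∑_v d(v) log w_{2t}(v)` from below, and
weighted AM–GM with weights `Q(v)` then bounds `∑_v d(v) w_{2t}(v)`, the number of walks of
length `2t + 1` starting in `U`. Finally `H(P) = log |E| - ∑_u P(u) log d(u)`, and likewise for `Q`.
-/

open Finset Real

namespace Finset

variable {ι : Type*} (s : Finset ι) {w x : ι → ℝ}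

theorem sum_mul_log_le_mul_log_sum_mul_div (hw : ∀ i ∈ s, 0 ≤ w i) (hx : ∀ i ∈ s, 0 < x i) :
    ∑ i ∈ s, w i * log (x i) ≤ (∑ i ∈ s, w i) * log ((∑ i ∈ s, w i * x i) / ∑ i ∈ s, w i) := by
  rcases (sum_nonneg hw).eq_or_lt with hW | hW
  · rw [← hW, zero_mul, sum_eq_zero]
    intro i hi
    rw [(sum_eq_zero_iff_of_nonneg hw).1 hW.symm i hi, zero_mul]
  have hjensen := strictConcaveOn_log_Ioi.concaveOn.le_map_sum (t := s)
    (w := fun i => w i / ∑ j ∈ s, w j) (fun i hi => div_nonneg (hw i hi) hW.le)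
    (by rw [← sum_div, div_self hW.ne']) hx
  simp only [smul_eq_mul, div_mul_eq_mul_div, ← sum_div] at hjensen
  rwa [div_le_iff₀' hW] at hjensen

theorem sum_mul_mul_exp_div_le (hw : ∀ i ∈ s, 0 ≤ w i) (hx : ∀ i ∈ s, 0 < x i) :
    (∑ i ∈ s, w i) * exp ((∑ i ∈ s, w i * log (x i)) / ∑ i ∈ s, w i) ≤ ∑ i ∈ s, w i * x i := by
  rcases (sum_nonneg hw).eq_or_lt with hW | hW
  · rw [← hW, zero_mul]
    exact sum_nonneg fun i hi => mul_nonneg (hw i hi) (hx i hi).le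
  have hT : 0 < ∑ i ∈ s, w i * x i := by
    obtain ⟨i, hi, hwi⟩ := exists_lt_of_sum_lt (s := s) (f := 0) (g := w) (by simpa using hW)
    exact sum_pos' (fun j hj => mul_nonneg (hw j hj) (hx j hj).le) ⟨i, hi, mul_pos hwi (hx i hi)⟩
  calc _ ≤ (∑ i ∈ s, w i) * exp (log ((∑ i ∈ s, w i * x i) / ∑ i ∈ s, w i)) := by
        gcongr
        rw [div_le_iff₀' hW]
        exact s.sum_mul_log_le_mul_log_sum_mul_div hw hx
    _ = ∑ i ∈ s, w i * x i := by rw [exp_log (div_pos hT hW), mul_div_cancel₀ _ hW.ne']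

theorem sum_log_add_card_mul_log_card_le (hx : ∀ i ∈ s, 0 < x i) :
    ∑ i ∈ s, log (x i) + #s * log #s ≤ #s * log (∑ i ∈ s, x i) := by
  rcases s.eq_empty_or_nonempty with rfl | hs
  · simp
  have h := s.sum_mul_log_le_mul_log_sum_mul_div (w := 1) (fun _ _ => zero_le_one) hx
  simp only [Pi.one_apply, one_mul, sum_const, nsmul_one] at h
  rw [log_div (sum_pos hx hs).ne' (by simpa using hs.ne_empty)] at h
  linarith

end Finset

theorem entPMF_div_of_sum_eq {α : Type*} [Fintype α] (d : α → ℝ) {E : ℝ}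
    (hE : ∑ a, d a = E) :
    entPMF (fun a => d a / E) = log E - (∑ a, d a * log (d a)) / E := by
  rcases eq_or_ne E 0 with rfl | hE0
  · simp [entPMF]
  have hterm (a : α) : d a / E * log (d a / E) = d a * log (d a) / E - d a / E * log E := by
    rcases eq_or_ne (d a) 0 with h | h
    · simp [h]
    rw [log_div h hE0]
    ring
  simp only [entPMF, hterm, sum_sub_distrib, ← sum_div, ← sum_mul, hE, div_self hE0]
  ring

namespace SimpleGraph

variable {W : Type*} [Fintype W] (G : SimpleGraph W)

noncomputable def walksFrom (k : ℕ) (x : W) : ℕ :=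
  ∑ y, Nat.card {w : G.Walk x y // w.length = k}

theorem walksFrom_eq_sum_adjMatrix_pow [DecidableEq W] [DecidableRel G.Adj] (k : ℕ) (x : W) :
    G.walksFrom k x = ∑ y, (G.adjMatrix ℕ ^ k) x y := by
  refine sum_congr rfl fun y _ => ?_
  rw [adjMatrix_pow_apply_eq_card_walk, Nat.card_eq_fintype_card]
  rfl

theorem walksFrom_zero (x : W) : G.walksFrom 0 x = 1 := by
  classical
  simp [walksFrom_eq_sum_adjMatrix_pow, Matrix.one_apply]

theorem walksFrom_succ [DecidableRel G.Adj] (k : ℕ) (x : W) :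
    G.walksFrom (k + 1) x = ∑ z, if G.Adj x z then G.walksFrom k z else 0 := by
  classical
  simp only [walksFrom_eq_sum_adjMatrix_pow, pow_succ', Matrix.mul_apply]
  rw [sum_comm]
  simp only [adjMatrix_apply, ite_mul, one_mul, zero_mul, sum_ite_irrel, sum_const_zero]

end SimpleGraph

theorem degL_swap {U V : Type*} [Fintype U] (R : U → V → Prop) [∀ u v, Decidable (R u v)] :
    degL (fun v u => R u v) = degR R := rfl

theorem degR_swap {U V : Type*} [Fintype V] (R : U → V → Prop) [∀ u v, Decidable (R u v)] :
    degR (fun v u => R u v) = degL R := rfl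

section Bipartite

variable {U V : Type*} [Fintype U] [Fintype V] (R : U → V → Prop) [∀ u v, Decidable (R u v)]

instance : DecidableRel (bipGraph R).Adj
  | .inl _, .inl _ => instDecidableFalse
  | .inl u, .inr v => inferInstanceAs (Decidable (R u v))
  | .inr v, .inl u => inferInstanceAs (Decidable (R u v))
  | .inr _, .inr _ => instDecidableFalse

theorem sum_degL_eq_edgeCount : ∑ u, degL R u = edgeCount R := by
  simp only [degL, edgeCount, card_filter, Fintype.sum_prod_type]

theorem sum_degR_eq_edgeCount : ∑ v, degR R v = edgeCount R := by
  simp only [degR, edgeCount, card_filter, Fintype.sum_prod_type]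
  exact sum_comm

theorem sum_sum_filter_eq_sum_degR_mul {M : Type*} [NonAssocSemiring M] (f : V → M) :
    ∑ u, ∑ v with R u v, f v = ∑ v, (degR R v : M) * f v := by
  simpa [bipartiteAbove, bipartiteBelow, degR, nsmul_eq_mul] using
    sum_sum_bipartiteAbove_eq_sum_sum_bipartiteBelow R (s := univ) (t := univ) fun _ v => f v

theorem sum_degL_mul_log_add_sum_degR_mul_log_le {c : V → ℝ} (hc : ∀ v, 0 < c v) :
    ∑ u, (degL R u : ℝ) * log (degL R u) + ∑ v, (degR R v : ℝ) * log (c v)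
      ≤ ∑ u, (degL R u : ℝ) * log (∑ v with R u v, c v) := by
  rw [← sum_sum_filter_eq_sum_degR_mul, ← sum_add_distrib]
  gcongr with u
  rw [add_comm]
  exact sum_log_add_card_mul_log_card_le _ fun v _ => hc v

theorem walksFrom_inl_succ (k : ℕ) (u : U) :
    (bipGraph R).walksFrom (k + 1) (.inl u) = ∑ v with R u v, (bipGraph R).walksFrom k (.inr v) := by
  rw [SimpleGraph.walksFrom_succ, Fintype.sum_sum_type, sum_filter]
  simp only [bipGraph, Sum.elim_inl, ↓reduceIte, sum_const_zero, Sum.elim_inr, zero_add]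
  congr

theorem walksFrom_inr_succ (k : ℕ) (v : V) :
    (bipGraph R).walksFrom (k + 1) (.inr v) = ∑ u with R u v, (bipGraph R).walksFrom k (.inl u) := by
  rw [SimpleGraph.walksFrom_succ, Fintype.sum_sum_type, sum_filter]
  simp only [bipGraph, Sum.elim_inr, Sum.elim_inl, ↓reduceIte, sum_const_zero, add_zero]
  congr

theorem walksFrom_pos (hisoL : ∀ u, ∃ v, R u v) (hisoR : ∀ v, ∃ u, R u v) (k : ℕ)
    (x : U ⊕ V) : 0 < (bipGraph R).walksFrom k x := by
  induction k generalizing x with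
  | zero => simp [SimpleGraph.walksFrom_zero]
  | succ k ih =>
    rcases x with u | v
    · obtain ⟨v, hv⟩ := hisoL u
      rw [walksFrom_inl_succ]
      exact sum_pos (fun v _ => ih _) ⟨v, by simpa using hv⟩
    · obtain ⟨u, hu⟩ := hisoR v
      rw [walksFrom_inr_succ]
      exact sum_pos (fun u _ => ih _) ⟨u, by simpa using hu⟩

theorem sum_degR_mul_walksFrom_le_walkCount (k : ℕ) :
    ∑ v, (degR R v : ℝ) * (bipGraph R).walksFrom k (.inr v) ≤ walkCount R (k + 1) := by
  have hcount : walkCount R (k + 1) = ∑ x, (bipGraph R).walksFrom (k + 1) x := rfl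
  rw [← sum_sum_filter_eq_sum_degR_mul, hcount, Nat.cast_sum, Fintype.sum_sum_type]
  simp only [walksFrom_inl_succ, Nat.cast_sum]
  exact le_add_of_nonneg_right (sum_nonneg fun _ _ => Nat.cast_nonneg _)

theorem mul_le_sum_degR_mul_log_walksFrom (hisoL : ∀ u, ∃ v, R u v) (hisoR : ∀ v, ∃ u, R u v)
    (t : ℕ) :
    t * (∑ u, (degL R u : ℝ) * log (degL R u) + ∑ v, (degR R v : ℝ) * log (degR R v))
      ≤ ∑ v, (degR R v : ℝ) * log ((bipGraph R).walksFrom (2 * t) (.inr v)) := by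
  have hpos (k : ℕ) (x : U ⊕ V) : (0 : ℝ) < (bipGraph R).walksFrom k x := by
    exact_mod_cast walksFrom_pos R hisoL hisoR k x
  induction t with
  | zero => simp [SimpleGraph.walksFrom_zero]
  | succ t ih =>
    have hU := sum_degL_mul_log_add_sum_degR_mul_log_le R fun v => hpos (2 * t) (.inr v)
    have hV := sum_degL_mul_log_add_sum_degR_mul_log_le (fun v u => R u v)
      fun u => hpos (2 * t + 1) (.inl u)
    simp only [← Nat.cast_sum, ← walksFrom_inl_succ, ← walksFrom_inr_succ, degL_swap,
      degR_swap] at hU hV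
    rw [show 2 * (t + 1) = 2 * t + 1 + 1 by ring]
    push_cast
    linarith

theorem edgeCount_mul_exp_le_walkCount (hisoL : ∀ u, ∃ v, R u v) (hisoR : ∀ v, ∃ u, R u v)
    (k : ℕ) :
    (edgeCount R : ℝ) * exp ((∑ v, (degR R v : ℝ) * log ((bipGraph R).walksFrom k (.inr v)))
      / edgeCount R) ≤ walkCount R (k + 1) := by
  have hsum : ∑ v, (degR R v : ℝ) = edgeCount R := by exact_mod_cast sum_degR_eq_edgeCount R
  calc _ ≤ ∑ v, (degR R v : ℝ) * (bipGraph R).walksFrom k (.inr v) := by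
        rw [← hsum]
        exact univ.sum_mul_mul_exp_div_le (fun _ _ => Nat.cast_nonneg _)
          fun v _ => by exact_mod_cast walksFrom_pos R hisoL hisoR k (.inr v)
    _ ≤ _ := sum_degR_mul_walksFrom_le_walkCount R k

end Bipartite

theorem walks_entropy_lower_bound_odd_general {U V : Type*} [Fintype U] [Fintype V]
    (R : U → V → Prop) [∀ u v, Decidable (R u v)]
    (hisoL : ∀ u : U, ∃ v : V, R u v) (hisoR : ∀ v : V, ∃ u : U, R u v)
    (k : ℕ) (hk : Odd k) :
    (edgeCount R : ℝ) ^ k *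
        Real.exp (-(((k : ℝ) - 1) / 2) *
          (entPMF (fun u : U => (degL R u : ℝ) / (edgeCount R : ℝ)) +
            entPMF (fun v : V => (degR R v : ℝ) / (edgeCount R : ℝ))))
      ≤ (walkCount R k : ℝ) := by
  obtain ⟨t, rfl⟩ := hk
  rcases (edgeCount R).eq_zero_or_pos with hE | hE
  · simp [hE]
  have hP := entPMF_div_of_sum_eq (fun u => (degL R u : ℝ)) (E := edgeCount R)
    (by exact_mod_cast sum_degL_eq_edgeCount R)
  have hQ := entPMF_div_of_sum_eq (fun v => (degR R v : ℝ)) (E := edgeCount R)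
    (by exact_mod_cast sum_degR_eq_edgeCount R)
  have hE : (0 : ℝ) < edgeCount R := by exact_mod_cast hE
  set E : ℝ := (edgeCount R : ℝ)
  set LP := ∑ u, (degL R u : ℝ) * log (degL R u)
  set LQ := ∑ v, (degR R v : ℝ) * log (degR R v)
  calc _ = E * exp (t * (LP + LQ) / E) := by
        have hexponent : -((((2 * t + 1 : ℕ) : ℝ) - 1) / 2) * (log E - LP / E + (log E - LQ / E))
            = t * (LP + LQ) / E - (2 * t : ℕ) * log E := by
          push_cast
          ring
        rw [hP, hQ, hexponent, exp_sub, exp_nat_mul, exp_log hE, pow_succ']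
        field_simp
    _ ≤ E * exp ((∑ v, (degR R v : ℝ) * log ((bipGraph R).walksFrom (2 * t) (.inr v))) / E) := by
        gcongr
        exact mul_le_sum_degR_mul_log_walksFrom R hisoL hisoR t
    _ ≤ walkCount R (2 * t + 1) := edgeCount_mul_exp_le_walkCount R hisoL hisoR (2 * t)

/-- Entropy-based lower bound on the number of walks of odd length `k` in a finite
bipartite graph with nonempty sides and no isolated vertices:
`|𝒫_k| ≥ |E(G)|^k · exp(-((k-1)/2) · (H(P) + H(Q)))`, where `P(u) = d(u)/|E(G)|` and
`Q(v) = d(v)/|E(G)|`. -/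
theorem walks_entropy_lower_bound_odd {U V : Type*} [Fintype U] [Fintype V]
    (R : U → V → Prop) [∀ u v, Decidable (R u v)]
    (hU : 0 < Fintype.card U) (hV : 0 < Fintype.card V)
    (hisoL : ∀ u : U, ∃ v : V, R u v) (hisoR : ∀ v : V, ∃ u : U, R u v)
    (k : ℕ) (hk0 : 0 < k) (hk : Odd k) :
    (edgeCount R : ℝ) ^ k *
        Real.exp (-(((k : ℝ) - 1) / 2) *
          (entPMF (fun u : U => (degL R u : ℝ) / (edgeCount R : ℝ)) +
            entPMF (fun v : V => (degR R v : ℝ) / (edgeCount R : ℝ))))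
      ≤ (walkCount R k : ℝ) :=
  walks_entropy_lower_bound_odd_general R hisoL hisoR k hk
end

section
/- Let G be a finite bipartite graph with left vertex set U of size m ≥ 1 and right vertex set V of size n ≥ 1, with no isolated vertices, and let k be an even positive integer. Let P and Q be the probability mass functions on U and V given by P(u) = d(u)/|E(G)| and Q(v) = d(v)/|E(G)|. Then the number |𝒫_k| of walks of length k in G (where edges may be repeated) satisfies |𝒫_k| ≥ |E(G)|^k · exp( -((k/2) - 1) · (H(P) + H(Q)) ) · exp( -min{H(P), H(Q)} ), where the entropies are in nats. -/
/-!
Write `w n x` for the number of walks of length `n` starting at `x`, and `P`, `Q` for the degree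
distributions of the two sides. Since `w (n + 1) u = ∑_{v ∼ u} w n v`, Jensen's inequality for `log`
gives `log w (n + 1) u ≥ log d(u) + d(u)⁻¹ ∑_{v ∼ u} log (w n v)`. Averaging over `u ∼ P` turns the
double sum into an average over `v ∼ Q`, so `𝔼_P log w (n + 1) ≥ log |E| - H(P) + 𝔼_Q log w n`, and
symmetrically with the sides exchanged. Alternating sides, `𝔼_P log w (2m)` and `𝔼_Q log w (2m)` are
both at least `m (2 log |E| - H(P) - H(Q))`. Gibbs' inequality `log ∑_u w u ≥ 𝔼_P log w + H(P)` then
bounds the walks starting on the left, and likewise on the right with `H(Q)`; the better of the two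
bounds carries `max{H(P), H(Q)} = H(P) + H(Q) - min{H(P), H(Q)}`.
-/

open Finset Real

section Jensen

lemma sum_mul_log_le_log_sum_mul {ι : Type*} (s : Finset ι) {w x : ι → ℝ}
    (hw : ∀ i ∈ s, 0 ≤ w i) (hw1 : ∑ i ∈ s, w i = 1) (hx : ∀ i ∈ s, 0 < x i) :
    ∑ i ∈ s, w i * log (x i) ≤ log (∑ i ∈ s, w i * x i) := by
  simpa only [smul_eq_mul] using strictConcaveOn_log_Ioi.concaveOn.le_map_sum hw hw1 hx

lemma card_mul_log_card_add_sum_log_le {ι : Type*} (s : Finset ι) {f : ι → ℝ}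
    (hf : ∀ i ∈ s, 0 < f i) : #s * log #s + ∑ i ∈ s, log (f i) ≤ #s * log (∑ i ∈ s, f i) := by
  rcases s.eq_empty_or_nonempty with rfl | hs
  · simp
  have hd : (0 : ℝ) < #s := by exact_mod_cast hs.card_pos
  have h := sum_mul_log_le_log_sum_mul s (w := fun _ => (#s : ℝ)⁻¹)
    (fun _ _ => by positivity) (by simp [hd.ne']) hf
  rw [← mul_sum, ← mul_sum, log_mul (inv_ne_zero hd.ne') (sum_pos hf hs).ne', log_inv,
    inv_mul_le_iff₀ hd] at h
  linarith

lemma sum_div_mul_log_eq_log_sub_entPMF {α : Type*} [Fintype α] (c : α → ℝ) :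
    ∑ a, c a / (∑ b, c b) * log (c a) = log (∑ b, c b) - entPMF (fun a => c a / ∑ b, c b) := by
  set E := ∑ b, c b with hE
  rcases eq_or_ne E 0 with h | h
  · simp [entPMF, h]
  have hlog : ∀ a, c a / E * log (c a / E) = c a / E * log (c a) - c a / E * log E := by
    intro a
    rcases eq_or_ne (c a) 0 with ha | ha
    · simp [ha]
    · rw [log_div ha h, mul_sub]
  simp only [entPMF, hlog, sum_sub_distrib, ← sum_mul, ← sum_div, ← hE, div_self h, one_mul]
  ring

lemma exp_sum_mul_log_add_entPMF_le_sum {α : Type*} [Fintype α] {p w : α → ℝ}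
    (hp : ∀ a, 0 < p a) (hp1 : ∑ a, p a = 1) (hw : ∀ a, 0 < w a) :
    exp (∑ a, p a * log (w a) + entPMF p) ≤ ∑ a, w a := by
  have hα : (univ : Finset α).Nonempty := nonempty_of_sum_ne_zero (hp1 ▸ one_ne_zero)
  rw [← le_log_iff_exp_le (sum_pos (fun a _ => hw a) hα)]
  have h := sum_mul_log_le_log_sum_mul univ (w := p) (x := fun a => w a / p a)
    (fun a _ => (hp a).le) hp1 (fun a _ => div_pos (hw a) (hp a))
  simp only [mul_div_cancel₀ _ (hp _).ne', log_div (hw _).ne' (hp _).ne', mul_sub,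
    sum_sub_distrib] at h
  rw [entPMF]
  linarith

end Jensen

section Walks

variable {W : Type*} [Fintype W] (G : SimpleGraph W) [DecidableRel G.Adj]

def numWalksFrom : ℕ → W → ℕ
  | 0, _ => 1
  | n + 1, x => ∑ y ∈ G.neighborFinset x, numWalksFrom n y

lemma numWalksFrom_pos (hG : ∀ x, ∃ y, G.Adj x y) (n : ℕ) (x : W) : 0 < numWalksFrom G n x := by
  induction n generalizing x with
  | zero => exact Nat.one_pos
  | succ n ih =>
    obtain ⟨y, hxy⟩ := hG x
    exact sum_pos (fun y _ => ih y) ⟨y, by simpa using hxy⟩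

lemma numWalksFrom_eq_sum_adjMatrix_pow [DecidableEq W] (n : ℕ) (x : W) :
    numWalksFrom G n x = ∑ y, (G.adjMatrix ℕ ^ n) x y := by
  induction n generalizing x with
  | zero => simp [numWalksFrom, Matrix.one_apply]
  | succ n ih =>
    simp only [numWalksFrom, pow_succ', SimpleGraph.adjMatrix_mul_apply, ih]
    exact sum_comm

lemma numWalksFrom_eq_sum_card_walk (n : ℕ) (x : W) :
    numWalksFrom G n x = ∑ y, Nat.card {w : G.Walk x y // w.length = n} := by
  classical
  simp only [numWalksFrom_eq_sum_adjMatrix_pow, SimpleGraph.adjMatrix_pow_apply_eq_card_walk,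
    Nat.card_eq_fintype_card]
  rfl

end Walks

section Degrees

variable {U V : Type*} {R : U → V → Prop} [∀ u v, Decidable (R u v)]

lemma degL_pos [Fintype V] {u : U} (h : ∃ v, R u v) : 0 < degL R u := by
  obtain ⟨v, huv⟩ := h
  exact card_pos.2 ⟨v, by simpa using huv⟩

lemma degR_pos [Fintype U] {v : V} (h : ∃ u, R u v) : 0 < degR R v := by
  obtain ⟨u, huv⟩ := h
  exact card_pos.2 ⟨u, by simpa using huv⟩

variable [Fintype U] [Fintype V] (R)

instance : ∀ v u, Decidable (flip R v u) := fun v u => inferInstanceAs (Decidable (R u v))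

lemma edgeCount_eq_sum_degL : edgeCount R = ∑ u, degL R u := by
  simp only [edgeCount, degL, card_filter]
  exact Fintype.sum_prod_type _

lemma edgeCount_eq_sum_degR : edgeCount R = ∑ v, degR R v := by
  simp only [edgeCount, degR, card_filter]
  exact Fintype.sum_prod_type_right _

lemma sum_sum_filter_eq_sum_degR_smul {M : Type*} [AddCommMonoid M] (g : V → M) :
    ∑ u, ∑ v with R u v, g v = ∑ v, degR R v • g v := by
  simp only [sum_filter]
  rw [sum_comm]
  simp only [← sum_filter, sum_const]
  rfl

lemma sum_degL_mul_log_degL_add_le (f : V → ℝ) (hf : ∀ v, 0 < f v) :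
    ∑ u, (degL R u : ℝ) * log (degL R u) + ∑ v, (degR R v : ℝ) * log (f v) ≤
      ∑ u, (degL R u : ℝ) * log (∑ v with R u v, f v) := by
  have hcount : ∑ v, (degR R v : ℝ) * log (f v) = ∑ u, ∑ v with R u v, log (f v) := by
    simp only [sum_sum_filter_eq_sum_degR_smul, nsmul_eq_mul]
  rw [hcount, ← sum_add_distrib]
  gcongr with u
  exact card_mul_log_card_add_sum_log_le _ fun v _ => hf v

variable {R}

lemma edgeCount_pos (hU : 0 < Fintype.card U) (hL : ∀ u, ∃ v, R u v) : 0 < edgeCount R := by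
  rw [edgeCount_eq_sum_degL]
  exact sum_pos (fun u _ => degL_pos (hL u)) (univ_nonempty_iff.2 (Fintype.card_pos_iff.1 hU))

end Degrees

section Bipartite

variable {U V : Type*} (R : U → V → Prop)

@[simp]
lemma bipGraph_adj_inl_inr {u : U} {v : V} : (bipGraph R).Adj (.inl u) (.inr v) ↔ R u v := .rfl

@[simp]
lemma bipGraph_adj_inr_inl {u : U} {v : V} : (bipGraph R).Adj (.inr v) (.inl u) ↔ R u v := .rfl

@[simp]
lemma bipGraph_not_adj_inl_inl {u u' : U} : ¬(bipGraph R).Adj (.inl u) (.inl u') := id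

@[simp]
lemma bipGraph_not_adj_inr_inr {v v' : V} : ¬(bipGraph R).Adj (.inr v) (.inr v') := id

variable [∀ u v, Decidable (R u v)]

instance inst_s14 : DecidableRel (bipGraph R).Adj
  | .inl _, .inl _ => .isFalse id
  | .inl u, .inr v => inferInstanceAs (Decidable (R u v))
  | .inr v, .inl u => inferInstanceAs (Decidable (R u v))
  | .inr _, .inr _ => .isFalse id

variable [Fintype U] [Fintype V]

lemma walkCount_eq_sum_numWalksFrom (k : ℕ) :
    walkCount R k = ∑ x, numWalksFrom (bipGraph R) k x := by
  simp only [walkCount, numWalksFrom_eq_sum_card_walk]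

lemma numWalksFrom_bipGraph_inl_succ (n : ℕ) (u : U) :
    numWalksFrom (bipGraph R) (n + 1) (.inl u) =
      ∑ v with R u v, numWalksFrom (bipGraph R) n (.inr v) := by
  have hN : (bipGraph R).neighborFinset (.inl u) = ({v | R u v} : Finset V).map .inr := by
    ext (u' | v) <;> simp
  rw [numWalksFrom, hN, sum_map]
  rfl

lemma numWalksFrom_bipGraph_inr_succ (n : ℕ) (v : V) :
    numWalksFrom (bipGraph R) (n + 1) (.inr v) =
      ∑ u with R u v, numWalksFrom (bipGraph R) n (.inl u) := by
  have hN : (bipGraph R).neighborFinset (.inr v) = ({u | R u v} : Finset U).map .inl := by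
    ext (u | v') <;> simp
  rw [numWalksFrom, hN, sum_map]
  rfl

lemma numWalksFrom_bipGraph_pos (hL : ∀ u, ∃ v, R u v) (hR : ∀ v, ∃ u, R u v) (n : ℕ)
    (x : U ⊕ V) : 0 < numWalksFrom (bipGraph R) n x := by
  refine numWalksFrom_pos _ ?_ n x
  rintro (u | v)
  · obtain ⟨v, huv⟩ := hL u
    exact ⟨.inr v, huv⟩
  · obtain ⟨u, huv⟩ := hR v
    exact ⟨.inl u, huv⟩

end Bipartite

section WalkEntropy

variable {U V : Type*} [Fintype U] [Fintype V] (R : U → V → Prop) [∀ u v, Decidable (R u v)]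

noncomputable def degDistL (u : U) : ℝ := degL R u / edgeCount R

noncomputable def degDistR (v : V) : ℝ := degR R v / edgeCount R

noncomputable def expectedLogWalksL (n : ℕ) : ℝ :=
  ∑ u, degDistL R u * log (numWalksFrom (bipGraph R) n (.inl u))

noncomputable def expectedLogWalksR (n : ℕ) : ℝ :=
  ∑ v, degDistR R v * log (numWalksFrom (bipGraph R) n (.inr v))

lemma sum_degDistL_mul_log_degL :
    ∑ u, degDistL R u * log (degL R u) = log (edgeCount R) - entPMF (degDistL R) := by
  have h := sum_div_mul_log_eq_log_sub_entPMF fun u => (degL R u : ℝ)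
  rwa [← Nat.cast_sum, ← edgeCount_eq_sum_degL] at h

lemma sum_degDistR_mul_log_degR :
    ∑ v, degDistR R v * log (degR R v) = log (edgeCount R) - entPMF (degDistR R) := by
  have h := sum_div_mul_log_eq_log_sub_entPMF fun v => (degR R v : ℝ)
  rwa [← Nat.cast_sum, ← edgeCount_eq_sum_degR] at h

lemma sum_degDistL (hE : edgeCount R ≠ 0) : ∑ u, degDistL R u = 1 := by
  simp only [degDistL]
  rw [← sum_div, ← Nat.cast_sum, ← edgeCount_eq_sum_degL, div_self (Nat.cast_ne_zero.2 hE)]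

lemma sum_degDistR (hE : edgeCount R ≠ 0) : ∑ v, degDistR R v = 1 := by
  simp only [degDistR]
  rw [← sum_div, ← Nat.cast_sum, ← edgeCount_eq_sum_degR, div_self (Nat.cast_ne_zero.2 hE)]

variable {R}

lemma degDistL_pos (hU : 0 < Fintype.card U) (hL : ∀ u, ∃ v, R u v) (u : U) :
    0 < degDistL R u :=
  div_pos (Nat.cast_pos.2 (degL_pos (hL u))) (Nat.cast_pos.2 (edgeCount_pos hU hL))

lemma degDistR_pos (hU : 0 < Fintype.card U) (hL : ∀ u, ∃ v, R u v) (hR : ∀ v, ∃ u, R u v)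
    (v : V) : 0 < degDistR R v :=
  div_pos (Nat.cast_pos.2 (degR_pos (hR v))) (Nat.cast_pos.2 (edgeCount_pos hU hL))

variable (hL : ∀ u, ∃ v, R u v) (hR : ∀ v, ∃ u, R u v)
include hL hR

lemma le_expectedLogWalksL_succ (n : ℕ) :
    log (edgeCount R) - entPMF (degDistL R) + expectedLogWalksR R n ≤
      expectedLogWalksL R (n + 1) := by
  have h := sum_degL_mul_log_degL_add_le R _ fun v =>
    Nat.cast_pos.2 (numWalksFrom_bipGraph_pos R hL hR n (.inr v))
  rw [← sum_degDistL_mul_log_degL]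
  simp only [expectedLogWalksL, expectedLogWalksR, degDistL, degDistR,
    numWalksFrom_bipGraph_inl_succ, Nat.cast_sum, div_mul_eq_mul_div, ← sum_div, ← add_div]
  gcongr

lemma le_expectedLogWalksR_succ (n : ℕ) :
    log (edgeCount R) - entPMF (degDistR R) + expectedLogWalksL R n ≤
      expectedLogWalksR R (n + 1) := by
  have h := sum_degL_mul_log_degL_add_le (flip R) _ fun u =>
    Nat.cast_pos.2 (numWalksFrom_bipGraph_pos R hL hR n (.inl u))
  rw [← sum_degDistR_mul_log_degR]
  simp only [expectedLogWalksL, expectedLogWalksR, degDistL, degDistR,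
    numWalksFrom_bipGraph_inr_succ, Nat.cast_sum, div_mul_eq_mul_div, ← sum_div, ← add_div]
  gcongr
  exact h

lemma le_expectedLogWalks_two_mul (m : ℕ) :
    m * (2 * log (edgeCount R) - entPMF (degDistL R) - entPMF (degDistR R)) ≤
        expectedLogWalksL R (2 * m) ∧
      m * (2 * log (edgeCount R) - entPMF (degDistL R) - entPMF (degDistR R)) ≤
        expectedLogWalksR R (2 * m) := by
  induction m with
  | zero => simp [expectedLogWalksL, expectedLogWalksR, numWalksFrom]
  | succ m ih =>
    have hL₁ := le_expectedLogWalksL_succ hL hR (2 * m)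
    have hR₁ := le_expectedLogWalksR_succ hL hR (2 * m)
    have hL₂ := le_expectedLogWalksL_succ hL hR (2 * m + 1)
    have hR₂ := le_expectedLogWalksR_succ hL hR (2 * m + 1)
    rw [show 2 * (m + 1) = 2 * m + 1 + 1 by ring]
    push_cast
    constructor <;> linarith [ih.1, ih.2]

lemma exp_expectedLogWalksL_add_entPMF_le (hU : 0 < Fintype.card U) (n : ℕ) :
    exp (expectedLogWalksL R n + entPMF (degDistL R)) ≤
      ∑ u, (numWalksFrom (bipGraph R) n (.inl u) : ℝ) :=
  exp_sum_mul_log_add_entPMF_le_sum (degDistL_pos hU hL) (sum_degDistL R (edgeCount_pos hU hL).ne')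
    fun _ => Nat.cast_pos.2 (numWalksFrom_bipGraph_pos R hL hR n _)

lemma exp_expectedLogWalksR_add_entPMF_le (hU : 0 < Fintype.card U) (n : ℕ) :
    exp (expectedLogWalksR R n + entPMF (degDistR R)) ≤
      ∑ v, (numWalksFrom (bipGraph R) n (.inr v) : ℝ) :=
  exp_sum_mul_log_add_entPMF_le_sum (degDistR_pos hU hL hR)
    (sum_degDistR R (edgeCount_pos hU hL).ne')
    fun _ => Nat.cast_pos.2 (numWalksFrom_bipGraph_pos R hL hR n _)

end WalkEntropy

theorem walks_entropy_lower_bound_even_general {U V : Type*} [Fintype U] [Fintype V]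
    (R : U → V → Prop) [∀ u v, Decidable (R u v)]
    (hU : 0 < Fintype.card U)
    (hisoL : ∀ u : U, ∃ v : V, R u v) (hisoR : ∀ v : V, ∃ u : U, R u v)
    (k : ℕ) (hk : Even k) :
    (edgeCount R : ℝ) ^ k *
        Real.exp (-((k : ℝ) / 2 - 1) *
          (entPMF (fun u : U => (degL R u : ℝ) / (edgeCount R : ℝ)) +
            entPMF (fun v : V => (degR R v : ℝ) / (edgeCount R : ℝ)))) *
        Real.exp (-min (entPMF (fun u : U => (degL R u : ℝ) / (edgeCount R : ℝ)))
          (entPMF (fun v : V => (degR R v : ℝ) / (edgeCount R : ℝ))))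
      ≤ (walkCount R k : ℝ) := by
  obtain ⟨m, rfl⟩ := hk
  rw [← two_mul]
  change (edgeCount R : ℝ) ^ (2 * m) * exp (-(((2 * m : ℕ) : ℝ) / 2 - 1) *
    (entPMF (degDistL R) + entPMF (degDistR R))) *
    exp (-min (entPMF (degDistL R)) (entPMF (degDistR R))) ≤ _
  have hE : (0 : ℝ) < edgeCount R := Nat.cast_pos.2 (edgeCount_pos hU hisoL)
  obtain ⟨hAL, hAR⟩ := le_expectedLogWalks_two_mul hisoL hisoR m
  have hSL := exp_expectedLogWalksL_add_entPMF_le hisoL hisoR hU (2 * m)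
  have hSR := exp_expectedLogWalksR_add_entPMF_le hisoL hisoR hU (2 * m)
  set HP := entPMF (degDistL R)
  set HQ := entPMF (degDistR R)
  set A := m * (2 * log (edgeCount R) - HP - HQ)
  rw [walkCount_eq_sum_numWalksFrom, Nat.cast_sum, Fintype.sum_sum_type]
  calc _ = exp (A + max HP HQ) := by
        rw [← exp_log (pow_pos hE _), log_pow, ← exp_add, ← exp_add]
        congr 1
        push_cast
        linarith [min_add_max HP HQ]
    _ = max (exp (A + HP)) (exp (A + HQ)) := by rw [← max_add_add_left, exp_monotone.map_max]
    _ ≤ _ := max_le_max ((exp_le_exp.2 (by linarith)).trans hSL)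
        ((exp_le_exp.2 (by linarith)).trans hSR)
    _ ≤ _ := max_le_add_of_nonneg (by positivity) (by positivity)

/-- Entropy-based lower bound on the number of walks of even length `k` in a finite
bipartite graph with nonempty sides and no isolated vertices:
`|𝒫_k| ≥ |E(G)|^k · exp(-(k/2 - 1) · (H(P) + H(Q))) · exp(-min{H(P), H(Q)})`,
where `P(u) = d(u)/|E(G)|` and `Q(v) = d(v)/|E(G)|`. -/
theorem walks_entropy_lower_bound_even {U V : Type*} [Fintype U] [Fintype V]
    (R : U → V → Prop) [∀ u v, Decidable (R u v)]
    (hU : 0 < Fintype.card U) (hV : 0 < Fintype.card V)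
    (hisoL : ∀ u : U, ∃ v : V, R u v) (hisoR : ∀ v : V, ∃ u : U, R u v)
    (k : ℕ) (hk0 : 0 < k) (hk : Even k) :
    (edgeCount R : ℝ) ^ k *
        Real.exp (-((k : ℝ) / 2 - 1) *
          (entPMF (fun u : U => (degL R u : ℝ) / (edgeCount R : ℝ)) +
            entPMF (fun v : V => (degR R v : ℝ) / (edgeCount R : ℝ)))) *
        Real.exp (-min (entPMF (fun u : U => (degL R u : ℝ) / (edgeCount R : ℝ)))
          (entPMF (fun v : V => (degR R v : ℝ) / (edgeCount R : ℝ))))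
      ≤ (walkCount R k : ℝ) :=
  walks_entropy_lower_bound_even_general R hU hisoL hisoR k hk
end
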